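/- If P is a temporal beer path from x to y within [t_α, t_ω] through beer vertex b at active time t, Q its x-b prefix and R its b-y suffix, and R' is a temporal b-y path with dist(R') ≤ dist(R) and start(R') ≥ start(R), then the concatenation of Q with R' is a temporal beer path from x to y within [t_α, t_ω] through b at time t, with dist(Q) + dist(R') ≤ dist(P). -/

import Mathlib

/-! The prefix `q` and its arrival at `b` are untouched, while `R'` departs from `b` no earlier
than `r`, hence no earlier than the visiting time `t`; so the junction of `q` and `R'` is
compatible and `b` is still visited at time `t`. The window is kept because `q ++ R'` starts
where `p` (or, if `q = []`, `R'`) starts and ends where `R'` ends. -/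

open scoped Classical

structure TEdge (V : Type) where
  src : V
  dst : V
  t : ℝ
  len : ℝ

variable {V : Type}

/-- Consecutive compatibility of temporal edges. -/
def compat (e f : TEdge V) : Prop := e.dst = f.src ∧ e.t + e.len ≤ f.t

/-- A temporal path from `x` to `y`: a nonempty list of temporal edges of `E`,
starting at `x`, ending at `y`, consecutively compatible. -/
def IsPath (E : Set (TEdge V)) (x y : V) (p : List (TEdge V)) : Prop :=
  p ≠ [] ∧ (∀ e ∈ p, e ∈ E) ∧ p.head?.map TEdge.src = some x ∧
    p.getLast?.map TEdge.dst = some y ∧ List.Chain' compat p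

/-- Starting time of a temporal path. -/
def startT (p : List (TEdge V)) : ℝ := ((p.head?).map TEdge.t).getD 0

/-- Ending (arrival) time of a temporal path. -/
def endT (p : List (TEdge V)) : ℝ := ((p.getLast?).map (fun e => e.t + e.len)).getD 0

/-- Distance (sum of traversal times) of a temporal path. -/
def distT (p : List (TEdge V)) : ℝ := (p.map TEdge.len).sum

/-- `p = q ++ r` witnesses a visit of beer vertex `b` at time `t`:
`b` is the endpoint of `q` (or the source `x` if `q` is empty), `t` is no
earlier than the arrival of the last edge of `q` and no later than the
departure of the first edge of `r`. -/
def BeerSplit (x b : V) (t : ℝ) (p q r : List (TEdge V)) : Prop :=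
  p = q ++ r ∧ ((q.getLast?).map TEdge.dst).getD x = b ∧
    (∀ e ∈ q.getLast?, e.t + e.len ≤ t) ∧ (∀ e ∈ r.head?, t ≤ e.t)

/-- A temporal beer path from `x` to `y`: a temporal path visiting some active
beer vertex `b ∈ B` at some time `t ∈ T b` between the arrival at `b` and the
departure from `b`. -/
def IsBeerPath (E : Set (TEdge V)) (B : Set V) (T : V → Set ℝ) (x y : V)
    (p : List (TEdge V)) : Prop :=
  IsPath E x y p ∧ ∃ b ∈ B, ∃ t ∈ T b, ∃ q r, BeerSplit x b t p q r

/-- The path `p` starts no earlier than `tα` and ends no later than `tω`. -/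
def InWin (tα tω : ℝ) (p : List (TEdge V)) : Prop :=
  tα ≤ startT p ∧ endT p ≤ tω

section TemporalPaths

variable {E : Set (TEdge V)} {x y b : V} {q r R : List (TEdge V)}

theorem distT_append (q r : List (TEdge V)) : distT (q ++ r) = distT q + distT r := by
  simp [distT]

theorem startT_append_of_ne_nil (hq : q ≠ []) (r : List (TEdge V)) :
    startT (q ++ r) = startT q := by
  obtain ⟨e, q, rfl⟩ := List.exists_cons_of_ne_nil hq
  rfl

theorem endT_append_of_ne_nil (q : List (TEdge V)) (hr : r ≠ []) :
    endT (q ++ r) = endT r := by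
  simp [endT, List.getLast?_append, List.getLast?_eq_some_getLast hr]

theorem le_startT_iff {s : ℝ} (hR : R ≠ []) : (∀ e ∈ R.head?, s ≤ e.t) ↔ s ≤ startT R := by
  obtain ⟨e, R, rfl⟩ := List.exists_cons_of_ne_nil hR
  simp [startT]

theorem isChain_compat_append (hq : q.IsChain compat) (hR : R.IsChain compat)
    (hqb : (q.getLast?.map TEdge.dst).getD x = b) (hRb : R.head?.map TEdge.src = some b)
    (hlink : ∀ e ∈ q.getLast?, e.t + e.len ≤ startT R) : (q ++ R).IsChain compat := by
  refine List.isChain_append.2 ⟨hq, hR, fun e he f hf => ⟨?_, ?_⟩⟩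
  · simp_all
  · obtain ⟨g, R, rfl⟩ := List.exists_cons_of_ne_nil (List.ne_nil_of_mem (List.mem_of_mem_head? hf))
    simp_all [startT]

theorem IsPath.exchange_suffix (hp : IsPath E x y (q ++ r))
    (hqb : (q.getLast?.map TEdge.dst).getD x = b) (hR : IsPath E b y R)
    (hlink : ∀ e ∈ q.getLast?, e.t + e.len ≤ startT R) : IsPath E x y (q ++ R) := by
  obtain ⟨-, hpE, hpx, -, hpchain⟩ := hp
  obtain ⟨hRne, hRE, hRb, hRy, hRchain⟩ := hR
  refine ⟨by simp [hRne], fun e he => ?_, ?_, ?_, ?_⟩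
  · rcases List.mem_append.1 he with he | he
    exacts [hpE e (List.mem_append_left r he), hRE e he]
  · rcases q with _ | ⟨e, q⟩
    · simp_all
    · simpa using hpx
  · simpa [List.getLast?_append, List.getLast?_eq_some_getLast hRne] using hRy
  · exact isChain_compat_append (List.isChain_append.1 hpchain).1 hRchain hqb hRb hlink

theorem InWin.exchange_suffix {tα tω : ℝ} (hp : InWin tα tω (q ++ r)) (hR : InWin tα tω R)
    (hRne : R ≠ []) : InWin tα tω (q ++ R) := by
  refine ⟨?_, (endT_append_of_ne_nil q hRne).trans_le hR.2⟩
  rcases eq_or_ne q [] with rfl | hq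
  · exact hR.1
  · simpa [startT_append_of_ne_nil hq] using hp.1

end TemporalPaths

/-- Exchange lemma for shortest beer paths: if `p = q ++ r` is a temporal beer
path from `x` to `y` within `[tα, tω]` through beer vertex `b` at active time
`t`, and `R'` is a temporal `b`-`y` path within `[tα, tω]` with
`distT R' ≤ distT r` and `startT r ≤ startT R'`, then `q ++ R'` is a temporal
beer path from `x` to `y` within `[tα, tω]` through `b` at time `t`, with
`distT q + distT R' ≤ distT p`. -/
theorem stmt16 (E : Set (TEdge V)) (B : Set V) (T : V → Set ℝ)
    (x y b : V) (t tα tω : ℝ) (p q r R' : List (TEdge V))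
    (hb : b ∈ B) (ht : t ∈ T b)
    (hp : IsPath E x y p) (hwin : InWin tα tω p)
    (hsplit : p = q ++ r) (hrne : r ≠ [])
    (hqb : ((q.getLast?).map TEdge.dst).getD x = b)
    (harr : ∀ e ∈ q.getLast?, e.t + e.len ≤ t)
    (hdep : ∀ e ∈ r.head?, t ≤ e.t)
    (hR' : IsPath E b y R') (hR'win : InWin tα tω R')
    (hdist : distT R' ≤ distT r) (hs : startT r ≤ startT R') :
    IsBeerPath E B T x y (q ++ R') ∧ InWin tα tω (q ++ R') ∧
    BeerSplit x b t (q ++ R') q R' ∧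
    distT q + distT R' ≤ distT p := by
  subst hsplit
  have hRne : R' ≠ [] := hR'.1
  have hdepR : t ≤ startT R' := ((le_startT_iff hrne).1 hdep).trans hs
  have hsplit' : BeerSplit x b t (q ++ R') q R' :=
    ⟨rfl, hqb, harr, (le_startT_iff hRne).2 hdepR⟩
  have hpath : IsPath E x y (q ++ R') :=
    hp.exchange_suffix hqb hR' fun e he => (harr e he).trans hdepR
  refine ⟨⟨hpath, b, hb, t, ht, q, R', hsplit'⟩, hwin.exchange_suffix hR'win hRne, hsplit', ?_⟩
  rw [distT_append]
  linarith
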